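/- arXiv:2211.02703 — 5 statements merged into one kernel-verified Lean document; each statement's English description precedes it below -/
import Mathlib

section
/- Let X and Y be independent random variables supported on [0,1] with E[Y] ≥ E[X], and let Z = max(X, Y). Then E[Z] ≥ E[X] + Var(X)/2. -/
open MeasureTheory ProbabilityTheory Real

theorem stmt2 {Ω : Type*} [MeasureSpace Ω] [IsProbabilityMeasure (ℙ : Measure Ω)]
    (X Y : Ω → ℝ) (hXm : Measurable X) (hYm : Measurable Y)
    (hX : ∀ ω, X ω ∈ Set.Icc (0:ℝ) 1) (hY : ∀ ω, Y ω ∈ Set.Icc (0:ℝ) 1)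
    (hind : IndepFun X Y ℙ)
    (hmean : (∫ ω, X ω ∂ℙ) ≤ ∫ ω, Y ω ∂ℙ) :
    (∫ ω, X ω ∂ℙ) + (∫ ω, (X ω - ∫ ω', X ω') ^ 2 ∂ℙ) / 2 ≤
      ∫ ω, max (X ω) (Y ω) ∂ℙ := by
  have bdd : ∀ (f : Ω → ℝ), Measurable f → (∀ ω, |f ω| ≤ 1) → Integrable f ℙ := by
    intro f hf hb
    exact (integrable_const (1:ℝ)).mono' hf.aestronglyMeasurable (Filter.Eventually.of_forall hb)
  have hXb : ∀ ω, |X ω| ≤ 1 := fun ω => abs_le.2 ⟨by linarith [(hX ω).1], (hX ω).2⟩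
  have hYb : ∀ ω, |Y ω| ≤ 1 := fun ω => abs_le.2 ⟨by linarith [(hY ω).1], (hY ω).2⟩
  have hXi : Integrable X ℙ := bdd X hXm hXb
  have hYi : Integrable Y ℙ := bdd Y hYm hYb
  have hX2i : Integrable (fun ω => X ω ^ 2) ℙ := by
    refine bdd _ (hXm.pow_const 2) fun ω => ?_
    rw [abs_pow]
    calc |X ω| ^ 2 ≤ 1 ^ 2 := by gcongr; exact hXb ω
    _ = 1 := one_pow 2
  have hY2i : Integrable (fun ω => Y ω ^ 2) ℙ := by
    refine bdd _ (hYm.pow_const 2) fun ω => ?_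
    rw [abs_pow]
    calc |Y ω| ^ 2 ≤ 1 ^ 2 := by gcongr; exact hYb ω
    _ = 1 := one_pow 2
  have hXYi : Integrable (fun ω => X ω * Y ω) ℙ := by
    refine bdd _ (hXm.mul hYm) fun ω => ?_
    rw [abs_mul]
    calc |X ω| * |Y ω| ≤ 1 * 1 :=
          mul_le_mul (hXb ω) (hYb ω) (abs_nonneg _) zero_le_one
    _ = 1 := one_mul 1
  set μX := ∫ ω, X ω ∂ℙ with hμX
  set μY := ∫ ω, Y ω ∂ℙ with hμY
  have hmul : ∫ ω, X ω * Y ω ∂ℙ = μX * μY :=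
    hind.integral_fun_mul_eq_mul_integral hXm.aestronglyMeasurable hYm.aestronglyMeasurable
  have expand : ∀ (f : Ω → ℝ), Measurable f → Integrable f ℙ →
      Integrable (fun ω => f ω ^ 2) ℙ → ∀ c : ℝ,
      ∫ ω, (f ω - c) ^ 2 ∂ℙ = (∫ ω, f ω ^ 2 ∂ℙ) - 2 * c * (∫ ω, f ω ∂ℙ) + c ^ 2 := by
    intro f hfm hfi hf2i c
    have h1 : ∀ ω, (f ω - c) ^ 2 = f ω ^ 2 - 2 * c * f ω + c ^ 2 := by intro ω; ring
    have h2 : Integrable (fun ω => f ω ^ 2 - 2 * c * f ω) ℙ := hf2i.sub (hfi.const_mul _)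
    have h3 : Integrable (fun ω => 2 * c * f ω) ℙ := hfi.const_mul _
    simp_rw [h1]
    rw [integral_add h2 (integrable_const _), integral_sub hf2i h3, integral_const_mul,
      integral_const]
    simp
  have hvar : ∫ ω, (X ω - μX) ^ 2 ∂ℙ = (∫ ω, X ω ^ 2 ∂ℙ) - μX ^ 2 := by
    rw [expand X hXm hXi hX2i μX, ← hμX]; ring
  have hvarY : 0 ≤ (∫ ω, Y ω ^ 2 ∂ℙ) - μY ^ 2 := by
    have h1 := expand Y hYm hYi hY2i μY
    rw [← hμY] at h1
    have h0 : (0:ℝ) ≤ ∫ ω, (Y ω - μY) ^ 2 ∂ℙ := integral_nonneg fun ω => sq_nonneg _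
    nlinarith
  have h2i : Integrable (fun ω => (X ω - Y ω) ^ 2) ℙ := by
    have h1 : ∀ ω, (X ω - Y ω) ^ 2 = X ω ^ 2 - 2 * (X ω * Y ω) + Y ω ^ 2 := by intro ω; ring
    simp_rw [h1]
    exact (hX2i.sub (hXYi.const_mul 2)).add hY2i
  have hdiff2 : ∫ ω, (X ω - Y ω) ^ 2 ∂ℙ
      = (∫ ω, X ω ^ 2 ∂ℙ) - 2 * (μX * μY) + ∫ ω, Y ω ^ 2 ∂ℙ := by
    have h1 : ∀ ω, (X ω - Y ω) ^ 2 = X ω ^ 2 - 2 * (X ω * Y ω) + Y ω ^ 2 := by intro ω; ring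
    have h2 : Integrable (fun ω => X ω ^ 2 - 2 * (X ω * Y ω)) ℙ := hX2i.sub (hXYi.const_mul 2)
    have h3 : Integrable (fun ω => 2 * (X ω * Y ω)) ℙ := hXYi.const_mul 2
    simp_rw [h1]
    rw [integral_add h2 hY2i, integral_sub hX2i h3, integral_const_mul, hmul]
  have hpt : ∀ ω, (X ω + Y ω) / 2 + (X ω - Y ω) ^ 2 / 2 ≤ max (X ω) (Y ω) := by
    intro ω
    obtain ⟨hx0, hx1⟩ := hX ω
    obtain ⟨hy0, hy1⟩ := hY ω
    rcases le_total (X ω) (Y ω) with h | h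
    · rw [max_eq_right h]; nlinarith
    · rw [max_eq_left h]; nlinarith
  have hmaxi : Integrable (fun ω => max (X ω) (Y ω)) ℙ := by
    refine bdd _ (hXm.max hYm) fun ω => ?_
    rw [abs_le]
    constructor
    · have := (hX ω).1; have := le_max_left (X ω) (Y ω); linarith
    · exact max_le (hXb ω |> abs_le.1).2 ((hYb ω |> abs_le.1).2)
  have hsum : Integrable (fun ω => (X ω + Y ω) / 2) ℙ := (hXi.add hYi).div_const 2
  have hLi : Integrable (fun ω => (X ω + Y ω) / 2 + (X ω - Y ω) ^ 2 / 2) ℙ :=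
    hsum.add (h2i.div_const 2)
  have hint : ∫ ω, ((X ω + Y ω) / 2 + (X ω - Y ω) ^ 2 / 2) ∂ℙ ≤ ∫ ω, max (X ω) (Y ω) ∂ℙ :=
    integral_mono hLi hmaxi hpt
  have hsplit : ∫ ω, ((X ω + Y ω) / 2 + (X ω - Y ω) ^ 2 / 2) ∂ℙ
      = (μX + μY) / 2 + (∫ ω, (X ω - Y ω) ^ 2 ∂ℙ) / 2 := by
    rw [integral_add hsum (h2i.div_const 2), integral_div, integral_div,
      integral_add hXi hYi]
  rw [hvar]
  rw [hsplit, hdiff2] at hint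
  nlinarith [hvarY, hmean]
end

section
/- Let X and Y be independent random variables in [0,1] with E[Y] ≥ E[X], and let μ_X = E[X]. Then E[max(X,Y)] ≥ E[X] + E[(X - μ_X)_+]. -/
open MeasureTheory ProbabilityTheory Real

theorem stmt3 {Ω : Type*} [MeasureSpace Ω] [IsProbabilityMeasure (ℙ : Measure Ω)]
    (X Y : Ω → ℝ) (hXm : Measurable X) (hYm : Measurable Y)
    (hX : ∀ ω, X ω ∈ Set.Icc (0:ℝ) 1) (hY : ∀ ω, Y ω ∈ Set.Icc (0:ℝ) 1)
    (hind : IndepFun X Y ℙ)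
    (hmean : (∫ ω, X ω ∂ℙ) ≤ ∫ ω, Y ω ∂ℙ) :
    (∫ ω, X ω ∂ℙ) + (∫ ω, max 0 (X ω - ∫ ω', X ω') ∂ℙ) ≤
      ∫ ω, max (X ω) (Y ω) ∂ℙ := by
  set μX : ℝ := ∫ ω, X ω ∂ℙ with hμX
  -- boundedness-based integrability helper
  have key : ∀ f : Ω → ℝ, Measurable f → (∀ ω, |f ω| ≤ 2) → Integrable f ℙ := by
    intro f hf hb
    exact (integrable_const (2:ℝ)).mono' hf.aestronglyMeasurable (ae_of_all _ hb)
  have hμX0 : 0 ≤ μX := integral_nonneg fun ω => (hX ω).1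
  have hμX1 : μX ≤ 1 := by
    calc μX ≤ ∫ _ : Ω, (1:ℝ) ∂ℙ := by
          apply integral_mono (key X hXm ?_) (integrable_const 1) (fun ω => (hX ω).2)
          intro ω; rw [abs_le]; constructor <;> nlinarith [(hX ω).1, (hX ω).2]
      _ = 1 := by simp
  -- the indicator of {X ≤ μX}
  set I : Ω → ℝ := fun ω => if X ω ≤ μX then 1 else 0 with hI
  have hIm : Measurable I := by
    have : I = (fun x : ℝ => if x ≤ μX then (1:ℝ) else 0) ∘ X := rfl
    rw [this]
    exact (Measurable.ite measurableSet_Iic measurable_const measurable_const).comp hXm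
  have hIb : ∀ ω, 0 ≤ I ω ∧ I ω ≤ 1 := by
    intro ω; simp only [hI]; split <;> norm_num
  -- integrability facts
  have hintX : Integrable X ℙ := key X hXm fun ω => by
    rw [abs_le]; constructor <;> nlinarith [(hX ω).1, (hX ω).2]
  have hintY : Integrable Y ℙ := key Y hYm fun ω => by
    rw [abs_le]; constructor <;> nlinarith [(hY ω).1, (hY ω).2]
  have hintI : Integrable I ℙ := key I hIm fun ω => by
    rw [abs_le]; constructor <;> nlinarith [(hIb ω).1, (hIb ω).2]
  have hintXI : Integrable (fun ω => X ω * I ω) ℙ :=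
    key _ (hXm.mul hIm) fun ω => by
      rw [abs_le]
      constructor <;> nlinarith [(hX ω).1, (hX ω).2, (hIb ω).1, (hIb ω).2]
  have hintYI : Integrable (fun ω => Y ω * I ω) ℙ :=
    key _ (hYm.mul hIm) fun ω => by
      rw [abs_le]
      constructor <;> nlinarith [(hY ω).1, (hY ω).2, (hIb ω).1, (hIb ω).2]
  have hintmax : Integrable (fun ω => max 0 (Y ω - X ω)) ℙ :=
    key _ (measurable_const.max (hYm.sub hXm)) fun ω => by
      rw [abs_le]
      constructor
      · nlinarith [le_max_left (0:ℝ) (Y ω - X ω)]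
      · have := max_le (by norm_num : (0:ℝ) ≤ 2)
          (by nlinarith [(hY ω).1, (hY ω).2, (hX ω).1, (hX ω).2] : Y ω - X ω ≤ 2)
        exact this
  have hintmaxμ : Integrable (fun ω => max 0 (X ω - μX)) ℙ :=
    key _ (measurable_const.max (hXm.sub measurable_const)) fun ω => by
      rw [abs_le]
      constructor
      · nlinarith [le_max_left (0:ℝ) (X ω - μX)]
      · exact max_le (by norm_num)
          (by nlinarith [(hX ω).1, (hX ω).2] : X ω - μX ≤ 2)
  -- independence of I and Y
  have hfm : Measurable (fun x : ℝ => if x ≤ μX then (1:ℝ) else 0) :=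
    Measurable.ite measurableSet_Iic measurable_const measurable_const
  have hindIY : IndepFun I Y ℙ := hind.comp hfm measurable_id
  have hprod : (∫ ω, Y ω * I ω ∂ℙ) = (∫ ω, Y ω ∂ℙ) * ∫ ω, I ω ∂ℙ := by
    have := hindIY.symm.integral_mul_eq_mul_integral hintY.aestronglyMeasurable hintI.aestronglyMeasurable
    simpa [Pi.mul_apply] using this
  -- Step 1: E[max X Y] = E[X] + E[(Y - X)₊]
  have step1 : (∫ ω, max (X ω) (Y ω) ∂ℙ)
      = μX + ∫ ω, max 0 (Y ω - X ω) ∂ℙ := by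
    rw [hμX, ← integral_add hintX hintmax]
    congr 1; funext ω
    rcases le_total (X ω) (Y ω) with h | h
    · rw [max_eq_right h, max_eq_right (by linarith)]; ring
    · rw [max_eq_left h, max_eq_left (by linarith)]; ring
  -- Step 2: E[(Y-X)₊] ≥ E[(Y - X) * I]
  have hintdiff : Integrable (fun ω => (Y ω - X ω) * I ω) ℙ := by
    have h := hintYI.sub hintXI
    simpa [sub_mul, Pi.sub_def] using h
  have step2 : (∫ ω, (Y ω - X ω) * I ω ∂ℙ) ≤ ∫ ω, max 0 (Y ω - X ω) ∂ℙ := by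
    apply integral_mono hintdiff hintmax
    intro ω
    simp only [hI]
    split
    · simp [le_max_right, le_max_left]; try exact le_max_right (0:ℝ) (Y ω - X ω)
    · simp [le_max_right, le_max_left]; try exact le_max_left (0:ℝ) (Y ω - X ω)
  -- Step 3: E[(Y-X)*I] = μY * E[I] - E[X*I] ≥ μX * E[I] - E[X*I]
  have hInonneg : 0 ≤ ∫ ω, I ω ∂ℙ := integral_nonneg fun ω => (hIb ω).1
  have step3 : μX * (∫ ω, I ω ∂ℙ) - (∫ ω, X ω * I ω ∂ℙ)
      ≤ ∫ ω, (Y ω - X ω) * I ω ∂ℙ := by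
    have : (∫ ω, (Y ω - X ω) * I ω ∂ℙ)
        = (∫ ω, Y ω ∂ℙ) * (∫ ω, I ω ∂ℙ) - ∫ ω, X ω * I ω ∂ℙ := by
      rw [← hprod, ← integral_sub hintYI hintXI]
      congr 1; funext ω; ring
    rw [this]
    have := mul_le_mul_of_nonneg_right hmean hInonneg
    linarith
  -- Step 4: μX * E[I] - E[X*I] = E[(μX - X)₊]
  have step4 : μX * (∫ ω, I ω ∂ℙ) - (∫ ω, X ω * I ω ∂ℙ)
      = ∫ ω, max 0 (μX - X ω) ∂ℙ := by
    rw [← integral_const_mul, ← integral_sub (hintI.const_mul μX) hintXI]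
    congr 1; funext ω
    simp only [hI]
    split <;> rename_i h
    · rw [max_eq_right (by linarith)]; ring
    · push_neg at h
      rw [max_eq_left (by linarith)]; ring
  -- Step 5: E[(μX - X)₊] = E[(X - μX)₊]
  have step5 : (∫ ω, max 0 (μX - X ω) ∂ℙ) = ∫ ω, max 0 (X ω - μX) ∂ℙ := by
    have heq : ∀ ω, max 0 (μX - X ω) = max 0 (X ω - μX) + (μX - X ω) := by
      intro ω
      rcases le_total (X ω) μX with h | h
      · rw [max_eq_right (by linarith), max_eq_left (by linarith)]; ring
      · rw [max_eq_left (by linarith), max_eq_right (by linarith)]; ring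
    have : (∫ ω, max 0 (μX - X ω) ∂ℙ)
        = (∫ ω, max 0 (X ω - μX) ∂ℙ) + ∫ ω, (μX - X ω) ∂ℙ := by
      rw [← integral_add hintmaxμ (by exact (integrable_const μX).sub hintX)]
      exact integral_congr_ae (ae_of_all _ heq)
    rw [this, integral_sub (integrable_const μX) hintX]
    simp [hμX.symm]
  have h45 : μX * (∫ ω, I ω ∂ℙ) - (∫ ω, X ω * I ω ∂ℙ)
      = ∫ ω, max 0 (X ω - μX) ∂ℙ := step4.trans step5
  rw [step1]
  linarith [step2, step3, h45]
end

section
/- Let X and Y be independent random variables in [0,1], let μ* ≥ E[X] be a real number with E[Y] ≥ μ*. Then E[max(X,Y)] ≥ μ* + E[max(0, X - μ*)]. -/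
open MeasureTheory ProbabilityTheory Real

lemma int_bdd {Ω : Type*} [MeasureSpace Ω] [IsProbabilityMeasure (ℙ : Measure Ω)]
    {f : Ω → ℝ} (hm : Measurable f) (C : ℝ) (h : ∀ ω, |f ω| ≤ C) :
    Integrable f ℙ :=
  (integrable_const C).mono' hm.aestronglyMeasurable (ae_of_all _ h)

theorem stmt4 {Ω : Type*} [MeasureSpace Ω] [IsProbabilityMeasure (ℙ : Measure Ω)]
    (X Y : Ω → ℝ) (hXm : Measurable X) (hYm : Measurable Y)
    (hX : ∀ ω, X ω ∈ Set.Icc (0:ℝ) 1) (hY : ∀ ω, Y ω ∈ Set.Icc (0:ℝ) 1)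
    (hind : IndepFun X Y ℙ)
    (μstar : ℝ) (hμX : (∫ ω, X ω ∂ℙ) ≤ μstar) (hμY : μstar ≤ ∫ ω, Y ω ∂ℙ) :
    μstar + (∫ ω, max 0 (X ω - μstar) ∂ℙ) ≤ ∫ ω, max (X ω) (Y ω) ∂ℙ := by
  set φ : ℝ → ℝ := fun t => if t ≤ μstar then 1 else 0 with hφ
  set ψ : ℝ → ℝ := fun t => t - μstar with hψ
  have hφm : Measurable φ :=
    Measurable.ite (measurableSet_le measurable_id measurable_const)
      measurable_const measurable_const
  have hψm : Measurable ψ := measurable_id.sub measurable_const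
  have hgm : Measurable (fun ω => φ (X ω)) := hφm.comp hXm
  have hindc : IndepFun (fun ω => φ (X ω)) (fun ω => ψ (Y ω)) ℙ :=
    hind.comp hφm hψm
  -- integrability facts
  have hgI : Integrable (fun ω => φ (X ω)) ℙ := by
    apply int_bdd hgm 1
    intro ω; simp only [hφ]; split <;> simp
  have hYψI : Integrable (fun ω => ψ (Y ω)) ℙ := by
    apply int_bdd (hψm.comp hYm) (1 + |μstar|)
    intro ω
    have := (hY ω).1; have := (hY ω).2
    simp only [hψ]
    calc |Y ω - μstar| ≤ |Y ω| + |μstar| := abs_sub _ _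
      _ ≤ 1 + |μstar| := by
        gcongr
        rw [abs_le]; constructor <;> linarith
  have hmaxI : Integrable (fun ω => max 0 (X ω - μstar)) ℙ := by
    apply int_bdd ((measurable_const.max (hXm.sub measurable_const))) (1 + |μstar|)
    intro ω
    have h1 := (hX ω).1; have h2 := (hX ω).2
    show |max 0 (X ω - μstar)| ≤ 1 + |μstar|; rw [abs_le]
    constructor
    · have : (0:ℝ) ≤ max 0 (X ω - μstar) := le_max_left _ _
      have : (0:ℝ) ≤ |μstar| := abs_nonneg _
      linarith
    · rcases le_or_gt (X ω - μstar) 0 with h | h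
      · rw [max_eq_left h]; positivity
      · rw [max_eq_right h.le]
        have := neg_abs_le μstar
        linarith
  have hprodI : Integrable (fun ω => φ (X ω) * ψ (Y ω)) ℙ := by
    apply int_bdd (hgm.mul (hψm.comp hYm)) (1 * (1 + |μstar|))
    intro ω
    show |φ (X ω) * ψ (Y ω)| ≤ 1 * (1 + |μstar|); rw [abs_mul]
    apply mul_le_mul
    · simp only [hφ]; split <;> simp
    · have := (hY ω).1; have := (hY ω).2
      simp only [hψ]
      calc |Y ω - μstar| ≤ |Y ω| + |μstar| := abs_sub _ _
        _ ≤ 1 + |μstar| := by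
          gcongr; rw [abs_le]; constructor <;> linarith
    · exact abs_nonneg _
    · norm_num
  have hmaxXYI : Integrable (fun ω => max (X ω) (Y ω)) ℙ := by
    apply int_bdd (hXm.max hYm) 1
    intro ω
    have h1 := (hX ω).1; have h2 := (hX ω).2
    have h3 := (hY ω).1; have h4 := (hY ω).2
    rw [abs_le]
    constructor
    · exact le_trans (by linarith) (le_max_left _ _)
    · exact max_le h2 h4
  -- pointwise inequality
  have hpt : ∀ ω, μstar + max 0 (X ω - μstar) + φ (X ω) * ψ (Y ω)
      ≤ max (X ω) (Y ω) := by
    intro ω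
    by_cases h : X ω ≤ μstar
    · have : max 0 (X ω - μstar) = 0 := max_eq_left (by linarith)
      simp only [hφ, hψ, if_pos h, this, one_mul]
      have : μstar + 0 + (Y ω - μstar) = Y ω := by ring
      rw [this]
      exact le_max_right _ _
    · push_neg at h
      have : max 0 (X ω - μstar) = X ω - μstar := max_eq_right (by linarith)
      simp only [hφ, hψ, if_neg (not_le.mpr h), zero_mul, this]
      have : μstar + (X ω - μstar) + 0 = X ω := by ring
      rw [this]
      exact le_max_left _ _
  -- factor the product by independence
  have hfactor : ∫ ω, φ (X ω) * ψ (Y ω) ∂ℙ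
      = (∫ ω, φ (X ω) ∂ℙ) * (∫ ω, ψ (Y ω) ∂ℙ) :=
    hindc.integral_fun_mul_eq_mul_integral hgI.aestronglyMeasurable hYψI.aestronglyMeasurable
  have hprod_nonneg : 0 ≤ ∫ ω, φ (X ω) * ψ (Y ω) ∂ℙ := by
    rw [hfactor]
    apply mul_nonneg
    · apply integral_nonneg
      intro ω; simp only [hφ]; split <;> norm_num
    · have : ∫ ω, ψ (Y ω) ∂ℙ = (∫ ω, Y ω ∂ℙ) - μstar := by
        simp only [hψ]
        rw [integral_sub (hYψI.add (integrable_const μstar) |>.congr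
          (ae_of_all _ (by intro ω; simp [hψ]))) (integrable_const μstar)]
        simp
      rw [this]; linarith
  -- combine
  have h1 : Integrable (fun ω => μstar + max 0 (X ω - μstar)) ℙ :=
    (integrable_const μstar).add hmaxI
  have h2 : Integrable (fun ω => μstar + max 0 (X ω - μstar) + φ (X ω) * ψ (Y ω)) ℙ :=
    h1.add hprodI
  have hsum : ∫ ω, (μstar + max 0 (X ω - μstar) + φ (X ω) * ψ (Y ω)) ∂ℙ
      = μstar + (∫ ω, max 0 (X ω - μstar) ∂ℙ) + ∫ ω, φ (X ω) * ψ (Y ω) ∂ℙ := by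
    rw [integral_add h1 hprodI, integral_add (integrable_const μstar) hmaxI]
    simp
  have hmono : ∫ ω, (μstar + max 0 (X ω - μstar) + φ (X ω) * ψ (Y ω)) ∂ℙ
      ≤ ∫ ω, max (X ω) (Y ω) ∂ℙ :=
    integral_mono h2 hmaxXYI hpt
  linarith [hsum ▸ hmono]
end

section
/- Let X_1, ..., X_n be (possibly dependent) random variables in [0,1] with means μ_i = E[X_i], let q be an index maximizing μ_i and set μ* = μ_q. For indices i,j let μ_{ij} = E[max(X_i, X_j)] (where X_i and X_q, and X_j and X_q, are independent pairs) and M* = max over pairs of μ_{qr}. If μ_{ij} < μ*, then M* - μ_{ij} ≥ Var(max(X_i, X_j))/4. -/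
open MeasureTheory ProbabilityTheory Real

set_option maxHeartbeats 1000000 in
theorem stmt5 {Ω : Type*} [MeasureSpace Ω] [IsProbabilityMeasure (ℙ : Measure Ω)]
    (n : ℕ) (X : Fin n → Ω → ℝ)
    (hXm : ∀ i, Measurable (X i)) (hX : ∀ i ω, X i ω ∈ Set.Icc (0:ℝ) 1)
    (hind : iIndepFun X ℙ)
    (q : Fin n) (hq : ∀ a, (∫ ω, X a ω ∂ℙ) ≤ ∫ ω, X q ω ∂ℙ)
    (Mstar : ℝ)
    (hM : IsGreatest {x : ℝ | ∃ a b : Fin n, x = ∫ ω, max (X a ω) (X b ω) ∂ℙ} Mstar)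
    (i j : Fin n)
    (hij : (∫ ω, max (X i ω) (X j ω) ∂ℙ) < ∫ ω, X q ω ∂ℙ) :
    (∫ ω, (max (X i ω) (X j ω) - ∫ ω', max (X i ω') (X j ω') ∂ℙ) ^ 2 ∂ℙ) / 4 ≤
      Mstar - ∫ ω, max (X i ω) (X j ω) ∂ℙ := by
  -- notation
  set Y : Ω → ℝ := fun ω => max (X i ω) (X j ω) with hYdef
  set m : ℝ := ∫ ω, Y ω ∂ℙ with hmdef
  set μ : ℝ := ∫ ω, X q ω ∂ℙ with hμdef
  have hYm : Measurable Y := (hXm i).max (hXm j)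
  -- integrability helper
  have hint : ∀ (f : Ω → ℝ), Measurable f → (∀ ω, |f ω| ≤ 2) → Integrable f ℙ := by
    intro f hf hb
    exact (integrable_const (2:ℝ)).mono' hf.aestronglyMeasurable (ae_of_all _ hb)
  have hXb : ∀ (a : Fin n) ω, |X a ω| ≤ 2 := by
    intro a ω
    have := hX a ω
    rw [abs_le]; constructor <;> [linarith [this.1]; linarith [this.2]]
  have hXint : ∀ a : Fin n, Integrable (X a) ℙ := fun a => hint _ (hXm a) (hXb a)
  have hY01 : ∀ ω, Y ω ∈ Set.Icc (0:ℝ) 1 := by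
    intro ω
    constructor
    · exact le_trans (hX i ω).1 (le_max_left _ _)
    · exact max_le (hX i ω).2 (hX j ω).2
  have hYb : ∀ ω, |Y ω| ≤ 2 := by
    intro ω; have := hY01 ω; rw [abs_le]; constructor <;> [linarith [this.1]; linarith [this.2]]
  have hYint : Integrable Y ℙ := hint _ hYm hYb
  -- m ∈ [0,1], m < μ
  have hm0 : 0 ≤ m := integral_nonneg fun ω => (hY01 ω).1
  have hm1 : m ≤ 1 := by
    have h := integral_mono hYint (integrable_const (1:ℝ)) fun ω => (hY01 ω).2
    simpa using h
  have hmμ : m < μ := hij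
  have hμ0 : 0 ≤ μ := le_trans hm0 hmμ.le
  have hμ1 : μ ≤ 1 := by
    have h := integral_mono (hXint q) (integrable_const (1:ℝ)) fun ω => (hX q ω).2
    simpa using h
  -- q ≠ i, q ≠ j
  have hXleY : ∀ a ∈ ({i, j} : Set (Fin n)), (∫ ω, X a ω ∂ℙ) ≤ m := by
    intro a ha
    refine integral_mono (hXint a) hYint fun ω => ?_
    rcases ha with h | h
    · rw [h]; exact le_max_left _ _
    · rw [Set.mem_singleton_iff] at h; rw [h]; exact le_max_right _ _
  have hqi : i ≠ q := by
    intro h; have := hXleY i (by simp); rw [h] at this; exact absurd hmμ (not_lt.2 this)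
  have hqj : j ≠ q := by
    intro h; have := hXleY j (by simp); rw [h] at this; exact absurd hmμ (not_lt.2 this)
  -- independence of Y and X q
  have hindY : IndepFun Y (X q) ℙ := by
    have h := hind.indepFun_prodMk hXm i j q hqi hqj
    have : Y = (fun p : ℝ × ℝ => max p.1 p.2) ∘ (fun ω => (X i ω, X j ω)) := rfl
    rw [this]
    exact h.comp (measurable_fst.max measurable_snd) measurable_id
  -- indicator of {Y ≥ μ}
  set g : ℝ → ℝ := fun y => if μ ≤ y then (1:ℝ) else 0 with hgdef
  have hgm : Measurable g := measurable_one.ite measurableSet_Ici measurable_zero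
  have hindg : IndepFun (g ∘ Y) (X q) ℙ := hindY.comp hgm measurable_id
  have hgYm : Measurable (g ∘ Y) := hgm.comp hYm
  have hgYb : ∀ ω, |(g ∘ Y) ω| ≤ 2 := by
    intro ω; simp only [Function.comp, hgdef]; split <;> norm_num
  have hgYint : Integrable (g ∘ Y) ℙ := hint _ hgYm hgYb
  have hmul : ∫ ω, (g ∘ Y) ω * X q ω ∂ℙ = (∫ ω, (g ∘ Y) ω ∂ℙ) * μ :=
    hindg.integral_fun_mul_eq_mul_integral hgYint.1 (hXint q).1
  -- key pointwise bounds and integral chain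
  -- integrable pieces
  have hI1 : Integrable (fun ω => (Y ω - m)^2) ℙ := by
    refine hint _ (by fun_prop) fun ω => ?_
    have h1 := hY01 ω
    rw [abs_le]
    constructor <;> nlinarith [h1.1, h1.2, hm0, hm1]
  have hI2 : Integrable (fun ω => |Y ω - m|) ℙ := (hYint.sub (integrable_const m)).abs
  have hI3 : Integrable (fun ω => max (Y ω - m) 0) ℙ := by
    refine hint _ (by fun_prop) fun ω => ?_
    have h1 := hY01 ω
    rw [abs_le]; constructor
    · nlinarith [le_max_right (Y ω - m) 0]
    · rcases max_cases (Y ω - m) 0 with ⟨h, _⟩ | ⟨h, _⟩ <;> rw [h] <;> nlinarith [h1.2, hm0]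
  have hI4 : Integrable (fun ω => max (Y ω - μ) 0) ℙ := by
    refine hint _ (by fun_prop) fun ω => ?_
    have h1 := hY01 ω
    rw [abs_le]; constructor
    · nlinarith [le_max_right (Y ω - μ) 0]
    · rcases max_cases (Y ω - μ) 0 with ⟨h, _⟩ | ⟨h, _⟩ <;> rw [h] <;> nlinarith [h1.2]
  have hI5 : Integrable (fun ω => max (Y ω - X q ω) 0) ℙ := by
    refine hint _ (by fun_prop) fun ω => ?_
    have h1 := hY01 ω; have h2 := hX q ω
    rw [abs_le]; constructor
    · nlinarith [le_max_right (Y ω - X q ω) 0]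
    · rcases max_cases (Y ω - X q ω) 0 with ⟨h, _⟩ | ⟨h, _⟩ <;> rw [h] <;>
        nlinarith [h1.2, h2.1]
  -- step 1:  V ≤ ∫ |Y - m|
  have step1 : (∫ ω, (Y ω - m)^2 ∂ℙ) ≤ ∫ ω, |Y ω - m| ∂ℙ := by
    refine integral_mono hI1 hI2 fun ω => ?_
    have h1 := hY01 ω
    have hab : |Y ω - m| ≤ 1 := by
      rw [abs_le]; constructor <;> [linarith [h1.1, hm1]; linarith [h1.2, hm0]]
    nlinarith [sq_abs (Y ω - m), abs_nonneg (Y ω - m)]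
  -- step 2:  ∫ |Y - m| = 2 ∫ (Y-m)^+
  have hEsub : (∫ ω, (Y ω - m) ∂ℙ) = 0 := by
    rw [integral_sub hYint (integrable_const m)]
    simp [hmdef]
  have step2 : (∫ ω, |Y ω - m| ∂ℙ) = 2 * ∫ ω, max (Y ω - m) 0 ∂ℙ := by
    have : (fun ω => |Y ω - m|) = fun ω => 2 * max (Y ω - m) 0 - (Y ω - m) := by
      funext ω
      rcases max_cases (Y ω - m) 0 with ⟨h, h'⟩ | ⟨h, h'⟩ <;> rw [h] <;>
        [rw [abs_of_nonneg h']; rw [abs_of_nonpos (le_of_lt h')]] <;> ring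
    have hIsub : Integrable (fun ω => Y ω - m) ℙ := by exact hYint.sub (integrable_const m)
    have hI3' : Integrable (fun ω => 2 * max (Y ω - m) 0) ℙ := by exact hI3.const_mul 2
    rw [this, integral_sub hI3' hIsub, hEsub, integral_const_mul]
    ring
  -- step 3: ∫ (Y-m)^+ ≤ ∫ (Y-μ)^+ + (μ - m)
  have step3 : (∫ ω, max (Y ω - m) 0 ∂ℙ) ≤ (∫ ω, max (Y ω - μ) 0 ∂ℙ) + (μ - m) := by
    have : (∫ ω, max (Y ω - m) 0 ∂ℙ) ≤ ∫ ω, (max (Y ω - μ) 0 + (μ - m)) ∂ℙ := by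
      refine integral_mono hI3 (hI4.add (integrable_const _)) fun ω => ?_
      rcases max_cases (Y ω - m) 0 with ⟨h, h'⟩ | ⟨h, h'⟩ <;> rw [h] <;>
        [skip; skip] <;> nlinarith [le_max_left (Y ω - μ) 0, le_max_right (Y ω - μ) 0, hmμ.le]
    rwa [integral_add hI4 (integrable_const _), integral_const, probReal_univ,
      one_smul] at this
  -- step 4: ∫ (Y-μ)^+ ≤ ∫ (Y - X q)^+
  have hmulz : (∫ ω, (g ∘ Y) ω * (X q ω - μ) ∂ℙ) = 0 := by
    have : (fun ω => (g ∘ Y) ω * (X q ω - μ)) =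
        fun ω => (g ∘ Y) ω * X q ω - μ * (g ∘ Y) ω := by funext ω; ring
    have hIgX : Integrable (fun ω => (g ∘ Y) ω * X q ω) ℙ := by
      exact hindg.integrable_mul hgYint (hXint q)
    have hIgc : Integrable (fun ω => μ * (g ∘ Y) ω) ℙ := by exact hgYint.const_mul μ
    rw [this, integral_sub hIgX hIgc, hmul, integral_const_mul]
    ring
  have step4 : (∫ ω, max (Y ω - μ) 0 ∂ℙ) ≤ ∫ ω, max (Y ω - X q ω) 0 ∂ℙ := by
    have hptw : ∀ ω, max (Y ω - μ) 0 ≤ max (Y ω - X q ω) 0 + (g ∘ Y) ω * (X q ω - μ) := by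
      intro ω
      simp only [Function.comp, hgdef]
      by_cases h : μ ≤ Y ω
      all_goals simp only [if_pos, if_neg, h, if_true, if_false]
      · have h1 : max (Y ω - μ) 0 = Y ω - μ := max_eq_left (by linarith)
        rw [h1]
        nlinarith [le_max_left (Y ω - X q ω) 0]
      · have h1 : max (Y ω - μ) 0 = 0 := max_eq_right (by push_neg at h; linarith)
        rw [h1]
        nlinarith [le_max_right (Y ω - X q ω) 0]
    have hImul : Integrable (fun ω => (g ∘ Y) ω * (X q ω - μ)) ℙ := by
      refine hint _ (by fun_prop) fun ω => ?_
      have h2 := hX q ω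
      have hga : |(g ∘ Y) ω| ≤ 1 := by
        simp only [Function.comp, hgdef]; split <;> norm_num
      have hxa : |X q ω - μ| ≤ 2 := by
        rw [abs_le]; constructor <;> [linarith [h2.1, hμ1]; linarith [h2.2, hμ0]]
      calc |(g ∘ Y) ω * (X q ω - μ)| = |(g ∘ Y) ω| * |X q ω - μ| := abs_mul _ _
        _ ≤ 1 * 2 := mul_le_mul hga hxa (abs_nonneg _) zero_le_one
        _ = 2 := by norm_num
    calc (∫ ω, max (Y ω - μ) 0 ∂ℙ)
        ≤ ∫ ω, (max (Y ω - X q ω) 0 + (g ∘ Y) ω * (X q ω - μ)) ∂ℙ :=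
          integral_mono hI4 (hI5.add hImul) hptw
      _ = (∫ ω, max (Y ω - X q ω) 0 ∂ℙ) + ∫ ω, (g ∘ Y) ω * (X q ω - μ) ∂ℙ :=
          integral_add hI5 hImul
      _ = ∫ ω, max (Y ω - X q ω) 0 ∂ℙ := by rw [hmulz]; ring
  -- step 5: ∫ (Y - X q)^+ ≤ 2 Mstar - 2 μ
  have hMiq : (∫ ω, max (X i ω) (X q ω) ∂ℙ) ≤ Mstar := hM.2 ⟨i, q, rfl⟩
  have hMjq : (∫ ω, max (X j ω) (X q ω) ∂ℙ) ≤ Mstar := hM.2 ⟨j, q, rfl⟩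
  have hImaxiq : Integrable (fun ω => max (X i ω) (X q ω)) ℙ := by
    refine hint _ (by fun_prop) fun ω => ?_
    have h1 := hX i ω; have h2 := hX q ω
    have hl : (0:ℝ) ≤ max (X i ω) (X q ω) := le_trans h1.1 (le_max_left _ _)
    have hu : max (X i ω) (X q ω) ≤ 1 := max_le h1.2 h2.2
    rw [abs_le]; constructor <;> linarith
  have hImaxjq : Integrable (fun ω => max (X j ω) (X q ω)) ℙ := by
    refine hint _ (by fun_prop) fun ω => ?_
    have h1 := hX j ω; have h2 := hX q ω
    have hl : (0:ℝ) ≤ max (X j ω) (X q ω) := le_trans h1.1 (le_max_left _ _)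
    have hu : max (X j ω) (X q ω) ≤ 1 := max_le h1.2 h2.2
    rw [abs_le]; constructor <;> linarith
  have step5 : (∫ ω, max (Y ω - X q ω) 0 ∂ℙ) ≤ 2 * Mstar - 2 * μ := by
    have hptw : ∀ ω, max (Y ω - X q ω) 0 ≤
        max (X i ω) (X q ω) + max (X j ω) (X q ω) - 2 * X q ω := by
      intro ω
      have h1 : X i ω ≤ max (X i ω) (X q ω) := le_max_left _ _
      have h2 : X j ω ≤ max (X j ω) (X q ω) := le_max_left _ _
      have h3 : X q ω ≤ max (X i ω) (X q ω) := le_max_right _ _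
      have h4 : X q ω ≤ max (X j ω) (X q ω) := le_max_right _ _
      rcases max_cases (Y ω - X q ω) 0 with ⟨h, h'⟩ | ⟨h, h'⟩ <;> rw [h]
      · rcases max_cases (X i ω) (X j ω) with ⟨hy, _⟩ | ⟨hy, _⟩ <;>
          simp only [hYdef] at * <;> rw [hy] <;> linarith
      · linarith
    calc (∫ ω, max (Y ω - X q ω) 0 ∂ℙ)
        ≤ ∫ ω, (max (X i ω) (X q ω) + max (X j ω) (X q ω) - 2 * X q ω) ∂ℙ := by
          refine integral_mono hI5 ?_ hptw
          exact (hImaxiq.add hImaxjq).sub ((hXint q).const_mul 2)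
      _ = (∫ ω, max (X i ω) (X q ω) ∂ℙ) + (∫ ω, max (X j ω) (X q ω) ∂ℙ) - 2 * μ := by
          have hIsum : Integrable (fun ω => max (X i ω) (X q ω) + max (X j ω) (X q ω)) ℙ := by
            exact hImaxiq.add hImaxjq
          have hIc2 : Integrable (fun ω => 2 * X q ω) ℙ := by exact (hXint q).const_mul 2
          rw [integral_sub hIsum hIc2, integral_add hImaxiq hImaxjq, integral_const_mul]
      _ ≤ 2 * Mstar - 2 * μ := by linarith
  -- combine
  have final : (∫ ω, (Y ω - m)^2 ∂ℙ) ≤ 4 * (Mstar - m) := by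
    have := step1
    rw [step2] at this
    linarith [step3, step4, step5, hmμ.le]
  show (∫ ω, (Y ω - m)^2 ∂ℙ) / 4 ≤ Mstar - m
  linarith [final]
end

section
/- Let D₁ and D₂ be probability distributions on nonnegative reals with bounded support satisfying exp(-η) ≤ Pr_{D₁}[X ≥ x]/Pr_{D₂}[X ≥ x] ≤ exp(η) and exp(-η) ≤ Pr_{D₁}[X ≤ x]/Pr_{D₂}[X ≤ x] ≤ exp(η) for all x, where η ∈ (0, 0.4]. If A, B are independent samples from D₁ and C is a sample from D₂, then E[min(A,B)] ≤ E[C]. -/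
/-!
Write `u = exp η`, `p = D₁[X ≥ t]` and `q = D₂[X ≥ t]`. The two privacy bounds at `t` give
`p ≤ u q` and `1 - q ≤ u (1 - p)`, and as long as `u` does not exceed the golden ratio these
force `p² ≤ q`. By independence `p²` is the tail `Pr[min(A, B) ≥ t]`, so the layer-cake formula
`E[Y] = ∫₀^∞ Pr[Y ≥ t] dt` gives `E[min(A, B)] ≤ E[C]`.
-/

open MeasureTheory ProbabilityTheory Real Set

lemma sq_le_of_le_mul_of_one_sub_le_mul {u p q : ℝ} (hu : 0 < u) (huφ : u ≤ goldenRatio)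
    (hp : 0 ≤ p) (hq : q ≤ 1) (hpq : p ≤ u * q) (hqp : 1 - q ≤ u * (1 - p)) : p ^ 2 ≤ q := by
  have hq₀ : 0 ≤ q := nonneg_of_mul_nonneg_right (hp.trans hpq) hu
  have hu_sq : u ^ 2 ≤ u + 1 := by
    nlinarith [goldenRatio_add_goldenConj, goldenRatio_mul_goldenConj, goldenConj_neg]
  rcases le_or_gt (u ^ 2 * q) 1 with hsmall | hlarge
  · nlinarith [mul_le_mul hpq hpq hp (by positivity)]
  · have hup : u * p ≤ u - 1 + q := by linarith
    -- the golden-ratio bound is `u (u - 1) ≤ 1`, so `(u - 1) ^ 2 ≤ u⁻¹ ^ 2 < q`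
    have hq_large : (u - 1) ^ 2 ≤ q := by nlinarith
    -- `u ^ 2 * q - (u - 1 + q) ^ 2 = (q - (u - 1) ^ 2) * (1 - q)`
    have hsq : (u - 1 + q) ^ 2 ≤ u ^ 2 * q := by
      nlinarith [mul_nonneg (sub_nonneg.2 hq_large) (sub_nonneg.2 hq)]
    nlinarith [pow_le_pow_left₀ (by positivity) hup 2]

lemma exp_le_goldenRatio {x : ℝ} (hx : x ≤ 0.4) : exp x ≤ goldenRatio := by
  have h5 : exp 0.4 ^ 5 = exp 1 ^ 2 := by
    rw [← exp_nat_mul, ← exp_nat_mul]; norm_num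
  have hexp : exp 0.4 ≤ 1.5 :=
    le_of_pow_le_pow_left₀ (n := 5) (by norm_num) (by norm_num)
      (by nlinarith [exp_one_lt_d9, exp_pos 1])
  have hφ : 1.5 ≤ goldenRatio := by
    show (1.5 : ℝ) ≤ (1 + √5) / 2
    nlinarith [sq_sqrt (show (0 : ℝ) ≤ 5 by norm_num), sqrt_nonneg 5]
  exact (exp_le_exp.2 hx).trans (hexp.trans hφ)

lemma measure_Iio_le_of_forall_Iic {α : Type*} [ConditionallyCompleteLinearOrder α]
    [TopologicalSpace α] [OrderTopology α] [DenselyOrdered α] [NoMinOrder α]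
    [FirstCountableTopology α] [MeasurableSpace α] {μ ν : Measure α} {c : ENNReal}
    (h : ∀ x, c * μ (Iic x) ≤ ν (Iic x)) (t : α) : c * μ (Iio t) ≤ ν (Iio t) := by
  obtain ⟨x, hx_mono, hx_lt, hx_lim⟩ := exists_seq_strictMono_tendsto t
  have hIic_mono : Monotone fun n => Iic (x n) := fun _ _ hmn =>
    Iic_subset_Iic.2 (hx_mono.monotone hmn)
  rw [← iUnion_Iic_eq_Iio_of_lt_of_tendsto hx_lt hx_lim, hIic_mono.measure_iUnion,
    hIic_mono.measure_iUnion, ENNReal.mul_iSup]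
  exact iSup_mono fun n => h (x n)

lemma measure_mul_self_le_of_two_sided_bound {α : Type*} [MeasurableSpace α] {μ ν : Measure α}
    [IsProbabilityMeasure μ] [IsProbabilityMeasure ν] {u : ℝ} (hu : 0 < u)
    (huφ : u ≤ goldenRatio) {s : Set α} (hs : MeasurableSet s)
    (hupper : μ s ≤ ENNReal.ofReal u * ν s) (hlower : ENNReal.ofReal u⁻¹ * ν sᶜ ≤ μ sᶜ) :
    μ s * μ s ≤ ν s := by
  have hupper' : μ.real s ≤ u * ν.real s := by
    simpa [measureReal_def, ENNReal.toReal_mul, hu.le] using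
      ENNReal.toReal_mono (by finiteness) hupper
  have hlower' : 1 - ν.real s ≤ u * (1 - μ.real s) := by
    have := ENNReal.toReal_mono (by finiteness) hlower
    rwa [ENNReal.toReal_mul, ENNReal.toReal_ofReal (inv_nonneg.2 hu.le), ← measureReal_def,
      ← measureReal_def, probReal_compl_eq_one_sub hs, probReal_compl_eq_one_sub hs,
      inv_mul_le_iff₀ hu] at this
  rw [← ENNReal.toReal_le_toReal (by finiteness) (by finiteness), ENNReal.toReal_mul,
    ← measureReal_def, ← measureReal_def, ← sq]
  exact sq_le_of_le_mul_of_one_sub_le_mul hu huφ measureReal_nonneg measureReal_le_one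
    hupper' hlower'

lemma integral_le_integral_of_tail_le {α β : Type*} [MeasurableSpace α] [MeasurableSpace β]
    {μ : Measure α} {ν : Measure β} {f : α → ℝ} {g : β → ℝ}
    (hf : 0 ≤ᵐ[μ] f) (hfm : AEMeasurable f μ) (hg : 0 ≤ᵐ[ν] g) (hgi : Integrable g ν)
    (h : ∀ t, 0 < t → μ {x | t ≤ f x} ≤ ν {x | t ≤ g x}) : ∫ x, f x ∂μ ≤ ∫ x, g x ∂ν := by
  rw [integral_eq_lintegral_of_nonneg_ae hf hfm.aestronglyMeasurable,
    integral_eq_lintegral_of_nonneg_ae hg hgi.aestronglyMeasurable]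
  refine ENNReal.toReal_mono hgi.lintegral_lt_top.ne ?_
  rw [lintegral_eq_lintegral_meas_le μ hf hfm, lintegral_eq_lintegral_meas_le ν hg hgi.aemeasurable]
  exact setLIntegral_mono' measurableSet_Ioi h

lemma ae_mem_of_map_eq {Ω α : Type*} [MeasurableSpace Ω] [MeasurableSpace α] {P : Measure Ω}
    {X : Ω → α} {D : Measure α} {s : Set α} (hX : Measurable X) (hlaw : P.map X = D)
    (hs : D sᶜ = 0) : ∀ᵐ ω ∂P, X ω ∈ s :=
  ae_of_ae_map hX.aemeasurable (hlaw ▸ mem_ae_iff.2 hs)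

theorem stmt7_general {Ω : Type*} [MeasureSpace Ω] [IsProbabilityMeasure (ℙ : Measure Ω)]
    (η : ℝ) (hη' : η ≤ 0.4)
    (D1 D2 : Measure ℝ) [IsProbabilityMeasure D1] [IsProbabilityMeasure D2]
    (M : ℝ) (hD1supp : D1 (Set.Icc 0 M)ᶜ = 0) (hD2supp : D2 (Set.Icc 0 M)ᶜ = 0)
    (hge : ∀ x : ℝ,
      ENNReal.ofReal (Real.exp (-η)) * D2 {y | x ≤ y} ≤ D1 {y | x ≤ y} ∧
      D1 {y | x ≤ y} ≤ ENNReal.ofReal (Real.exp η) * D2 {y | x ≤ y})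
    (hle : ∀ x : ℝ,
      ENNReal.ofReal (Real.exp (-η)) * D2 {y | y ≤ x} ≤ D1 {y | y ≤ x} ∧
      D1 {y | y ≤ x} ≤ ENNReal.ofReal (Real.exp η) * D2 {y | y ≤ x})
    (A B C : Ω → ℝ) (hA : Measurable A) (hB : Measurable B) (hC : Measurable C)
    (hlawA : Measure.map A ℙ = D1) (hlawB : Measure.map B ℙ = D1)
    (hlawC : Measure.map C ℙ = D2) (hAB : IndepFun A B ℙ) :
    (∫ ω, min (A ω) (B ω) ∂ℙ) ≤ ∫ ω, C ω ∂ℙ := by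
  have hA_mem := ae_mem_of_map_eq hA hlawA hD1supp
  have hB_mem := ae_mem_of_map_eq hB hlawB hD1supp
  have hC_mem := ae_mem_of_map_eq hC hlawC hD2supp
  have hmin_nonneg : 0 ≤ᵐ[ℙ] fun ω => min (A ω) (B ω) := by
    filter_upwards [hA_mem, hB_mem] with ω hAω hBω using le_min hAω.1 hBω.1
  refine integral_le_integral_of_tail_le hmin_nonneg (hA.min hB).aemeasurable
    (hC_mem.mono fun _ h => h.1) (Integrable.of_mem_Icc 0 M hC.aemeasurable hC_mem) fun t _ => ?_
  have hmin_tail : {ω | t ≤ min (A ω) (B ω)} = A ⁻¹' Ici t ∩ B ⁻¹' Ici t := by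
    ext ω; simp
  change ℙ {ω | t ≤ min (A ω) (B ω)} ≤ ℙ (C ⁻¹' Ici t)
  rw [hmin_tail, hAB.measure_inter_preimage_eq_mul _ _ measurableSet_Ici measurableSet_Ici,
    ← Measure.map_apply hA measurableSet_Ici, ← Measure.map_apply hB measurableSet_Ici,
    ← Measure.map_apply hC measurableSet_Ici, hlawA, hlawB, hlawC]
  refine measure_mul_self_le_of_two_sided_bound (exp_pos η) (exp_le_goldenRatio hη')
    measurableSet_Ici (hge t).2 ?_
  rw [← exp_neg, compl_Ici]
  exact measure_Iio_le_of_forall_Iic (fun x => (hle x).1) t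

theorem stmt7 {Ω : Type*} [MeasureSpace Ω] [IsProbabilityMeasure (ℙ : Measure Ω)]
    (η : ℝ) (hη : 0 < η) (hη' : η ≤ 0.4)
    (D1 D2 : Measure ℝ) [IsProbabilityMeasure D1] [IsProbabilityMeasure D2]
    (M : ℝ) (hD1supp : D1 (Set.Icc 0 M)ᶜ = 0) (hD2supp : D2 (Set.Icc 0 M)ᶜ = 0)
    (hge : ∀ x : ℝ,
      ENNReal.ofReal (Real.exp (-η)) * D2 {y | x ≤ y} ≤ D1 {y | x ≤ y} ∧
      D1 {y | x ≤ y} ≤ ENNReal.ofReal (Real.exp η) * D2 {y | x ≤ y})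
    (hle : ∀ x : ℝ,
      ENNReal.ofReal (Real.exp (-η)) * D2 {y | y ≤ x} ≤ D1 {y | y ≤ x} ∧
      D1 {y | y ≤ x} ≤ ENNReal.ofReal (Real.exp η) * D2 {y | y ≤ x})
    (A B C : Ω → ℝ) (hA : Measurable A) (hB : Measurable B) (hC : Measurable C)
    (hlawA : Measure.map A ℙ = D1) (hlawB : Measure.map B ℙ = D1)
    (hlawC : Measure.map C ℙ = D2) (hAB : IndepFun A B ℙ) :
    (∫ ω, min (A ω) (B ω) ∂ℙ) ≤ ∫ ω, C ω ∂ℙ :=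
  stmt7_general η hη' D1 D2 M hD1supp hD2supp hge hle A B C hA hB hC hlawA hlawB hlawC hAB
end
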